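/- Let G be a finite graph with oriented edges, C a set of cycles of G, and φ the map on pairs of edges defined by φ(E^{e,f}) = Σ_{c ∈ C : e,f ∈ c} ε_c^{e,f} c. Then: (1) φ(E^{e,e}) = C*(e) for every edge e; and (2) if e ≠ f are non-loop edges sharing a vertex v with third incident edge g (assuming v has degree 3), then φ(E^{e,f}) = −δ^{v,e} δ^{v,f} · C*(½(e + f + g) − g), an element of C*(𝒞_G). -/
import Mathlib


/-- A cycle of length `k` in the graph with vertex set `V`, edge set `E` and
source/target maps `s t : E → V`: `k` distinct vertices and `k` distinct edges
with `{s(eᵢ), t(eᵢ)} = {vᵢ, vᵢ₊₁}` (indices mod `k`). -/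
structure GCycle {V E : Type*} (s t : E → V) (k : ℕ) where
  pos : 0 < k
  vtx : ZMod k → V
  edg : ZMod k → E
  vtx_inj : Function.Injective vtx
  edg_inj : Function.Injective edg
  ends : ∀ i, ({s (edg i), t (edg i)} : Set V) = {vtx i, vtx (i + 1)}

/-- A cycle of the graph (of some length). -/
abbrev GraphCycle {V E : Type*} (s t : E → V) : Type _ := (k : ℕ) × GCycle s t k

/-- The edge `e` belongs to the cycle `c`. -/
def GraphCycle.memE {V E : Type*} {s t : E → V} (c : GraphCycle s t) (e : E) : Prop :=
  ∃ i, c.2.edg i = e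

open Classical in
/-- The map `C* : ℤ^{E(G)} → ℤ^C`, sending each edge `e` to the sum of the
cycles in `C` containing `e`, extended `ℤ`-linearly. -/
noncomputable def cycleMap {V E : Type*} [Fintype E] (s t : E → V)
    (C : Set (GraphCycle s t)) (x : E → ℤ) : C → ℤ :=
  fun c => ∑ e : E, if (c : GraphCycle s t).memE e then x e else 0

open Classical

/-- The extension of the map `C*` to half-integer (here: rational) coefficients. -/
noncomputable def cycleMapQ {V E : Type*} [Fintype E] (s t : E → V)
    (C : Set (GraphCycle s t)) (x : E → ℚ) : C → ℚ :=
  fun c => ∑ e : E, if (c : GraphCycle s t).memE e then x e else 0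

/-- The indicator function of an edge, as an element of `(½ℤ)^{E(G)} ⊆ ℚ^{E(G)}`. -/
noncomputable def edgeInd {E : Type*} (e : E) : E → ℚ :=
  fun e' => if e' = e then 1 else 0

/-- For a vertex `w` of a 3-regular graph, `u_w` is half the sum of the (indicators
of the) three edges at `w`, loops counted twice. -/
noncomputable def uVtx {V E : Type*} (s t : E → V) (w : V) : E → ℚ :=
  fun e => (1/2 : ℚ) * ((if s e = w then 1 else 0) + (if t e = w then 1 else 0))

/-- The submodule `𝒞_G ⊆ (½ℤ)^{E(G)}` spanned by the edge indicators together with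
the elements `u_w` for all vertices `w`. -/
noncomputable def CGsub {V E : Type*} (s t : E → V) : Submodule ℤ (E → ℚ) :=
  Submodule.span ℤ (Set.range (edgeInd (E := E)) ∪ Set.range (uVtx s t))

/-- `ε_c^{e,f} ∈ {±1}`: whether `e` and `f` have matching orientation along the
cycle `c` (in particular `ε_c^{e,e} = +1`). -/
noncomputable def epsCyc {V E : Type*} (s t : E → V) (c : GraphCycle s t) (e f : E) : ℤ :=
  if ∃ i j, c.2.edg i = e ∧ c.2.edg j = f ∧ ((s e = c.2.vtx i) ↔ (s f = c.2.vtx j))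
    then 1 else -1

/-- The value of `φ` on the generator `E^{e,f}`: the vector in `ℤ^C` whose
`c`-coordinate is `ε_c^{e,f}` if `c ∈ C` contains both `e` and `f`, and `0`
otherwise. -/
noncomputable def phiGenC {V E : Type*} (s t : E → V) (C : Set (GraphCycle s t))
    (e f : E) : C → ℤ :=
  fun c => if (c : GraphCycle s t).memE e ∧ (c : GraphCycle s t).memE f
    then epsCyc s t c e f else 0

section Aux

variable {V E : Type*} {s t : E → V}

private lemma eps_eq (c : GraphCycle s t) {e f : E} {i j : ZMod c.1}
    (hi : c.2.edg i = e) (hj : c.2.edg j = f) :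
    epsCyc s t c e f = if (s e = c.2.vtx i ↔ s f = c.2.vtx j) then 1 else -1 := by
  unfold epsCyc
  by_cases h : (s e = c.2.vtx i ↔ s f = c.2.vtx j)
  · rw [if_pos ⟨i, j, hi, hj, h⟩, if_pos h]
  · rw [if_neg ?_, if_neg h]
    rintro ⟨i', j', hi', hj', h'⟩
    obtain rfl : i' = i := c.2.edg_inj (hi'.trans hi.symm)
    obtain rfl : j' = j := c.2.edg_inj (hj'.trans hj.symm)
    exact h h'

private lemma two_le {k : ℕ} (c : GCycle s t k) {e : E} (i : ZMod k)
    (hie : c.edg i = e) (hne : s e ≠ t e) : 2 ≤ k := by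
  by_contra h
  have hk : k = 1 := by have := c.pos; omega
  subst hk
  have h1 : c.vtx (i + 1) = c.vtx i := congrArg c.vtx (Subsingleton.elim _ _)
  have h0 := c.ends i
  rw [hie, h1] at h0
  have hs : s e ∈ ({c.vtx i, c.vtx i} : Set V) := h0 ▸ Set.mem_insert _ _
  have ht : t e ∈ ({c.vtx i, c.vtx i} : Set V) := h0 ▸ Set.mem_insert_of_mem _ rfl
  simp only [Set.mem_insert_iff, Set.mem_singleton_iff, or_self] at hs ht
  exact hne (hs.trans ht.symm)

private lemma endpoint_xor {e : E} {x y : V} (hst : s e ≠ t e) (hxy : x ≠ y)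
    (h : ({s e, t e} : Set V) = {x, y}) : (s e = x ↔ ¬ s e = y) := by
  rcases Set.pair_eq_pair_iff.mp h with ⟨h1, h2⟩ | ⟨h1, h2⟩
  · simp [h1, hxy]
  · simp [h1, hxy.symm]

private lemma vmem {k : ℕ} (c : GCycle s t k) {v : V} (j : ZMod k)
    (hj : s (c.edg j) = v ∨ t (c.edg j) = v) :
    v ∈ ({c.vtx j, c.vtx (j + 1)} : Set V) := by
  rw [← c.ends j]
  rcases hj with h | h
  · exact Set.mem_insert_iff.mpr (Or.inl h.symm)
  · exact Set.mem_insert_iff.mpr (Or.inr (Set.mem_singleton_iff.mpr h.symm))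

private lemma through_at {k : ℕ} (c : GCycle s t k) {v : V} (j : ZMod k)
    (hj : s (c.edg j) = v ∨ t (c.edg j) = v) : ∃ i, c.vtx i = v := by
  rcases Set.mem_insert_iff.mp (vmem c j hj) with h | h
  · exact ⟨j, h.symm⟩
  · exact ⟨j + 1, (Set.mem_singleton_iff.mp h).symm⟩

private lemma index_at {k : ℕ} (c : GCycle s t k) {v : V} {i j : ZMod k}
    (hiv : c.vtx i = v) (hj : s (c.edg j) = v ∨ t (c.edg j) = v) :
    j = i ∨ j + 1 = i := by
  rcases Set.mem_insert_iff.mp (vmem c j hj) with h | h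
  · exact Or.inl (c.vtx_inj (h.symm.trans hiv.symm))
  · exact Or.inr (c.vtx_inj ((Set.mem_singleton_iff.mp h).symm.trans hiv.symm))

private lemma incident_of_vtx {k : ℕ} (c : GCycle s t k) {v : V} (j : ZMod k)
    (h : c.vtx j = v ∨ c.vtx (j + 1) = v) :
    s (c.edg j) = v ∨ t (c.edg j) = v := by
  have hmem : v ∈ ({s (c.edg j), t (c.edg j)} : Set V) := by
    rw [c.ends j]
    rcases h with h | h
    · exact Set.mem_insert_iff.mpr (Or.inl h.symm)
    · exact Set.mem_insert_iff.mpr (Or.inr (Set.mem_singleton_iff.mpr h.symm))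
  rcases Set.mem_insert_iff.mp hmem with h | h
  · exact Or.inl h.symm
  · exact Or.inr (Set.mem_singleton_iff.mp h).symm

private lemma g_one_end [Fintype E] {v : V} {e f g : E}
    (hef : e ≠ f) (he : s e ≠ t e) (hf : s f ≠ t f)
    (hcard : Nat.card {e' : E // s e' = v} + Nat.card {e' : E // t e' = v} = 3)
    (hge : g ≠ e) (hgf : g ≠ f)
    (hv : ∀ e' : E, (s e' = v ∨ t e' = v) ↔ (e' = e ∨ e' = f ∨ e' = g)) :
    ¬ (s g = v ∧ t g = v) := by
  rintro ⟨hs, ht⟩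
  have hrw : ∀ p : E → Prop, (∀ x, p x → (x = e ∨ x = f ∨ x = g)) →
      (Finset.univ.filter p).card
        = (if p e then 1 else 0) + ((if p f then 1 else 0) + (if p g then 1 else 0)) := by
    intro p hp
    have h1 : Finset.univ.filter p = ({e, f, g} : Finset E).filter p := by
      ext x
      simp only [Finset.mem_filter, Finset.mem_univ, true_and, Finset.mem_insert,
        Finset.mem_singleton]
      exact ⟨fun hx => ⟨hp x hx, hx⟩, fun hx => hx.2⟩
    rw [h1, Finset.card_filter]
    rw [show ({e, f, g} : Finset E) = insert e (insert f {g}) from rfl]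
    rw [Finset.sum_insert (by simp [hef, Ne.symm hge]),
        Finset.sum_insert (by simp [Ne.symm hgf]), Finset.sum_singleton]
  have hNs : Nat.card {e' : E // s e' = v}
      = (Finset.univ.filter (fun e' => s e' = v)).card := by
    rw [Nat.card_eq_fintype_card, Fintype.card_subtype]
  have hNt : Nat.card {e' : E // t e' = v}
      = (Finset.univ.filter (fun e' => t e' = v)).card := by
    rw [Nat.card_eq_fintype_card, Fintype.card_subtype]
  rw [hNs, hNt, hrw _ (fun x hx => (hv x).mp (Or.inl hx)),
      hrw _ (fun x hx => (hv x).mp (Or.inr hx))] at hcard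
  have hev : s e = v ∨ t e = v := (hv e).mpr (Or.inl rfl)
  have hfv : s f = v ∨ t f = v := (hv f).mpr (Or.inr (Or.inl rfl))
  have hne : ¬(s e = v ∧ t e = v) := fun h => he (h.1.trans h.2.symm)
  have hnf : ¬(s f = v ∧ t f = v) := fun h => hf (h.1.trans h.2.symm)
  by_cases h1 : s e = v <;> by_cases h2 : t e = v <;>
    by_cases h3 : s f = v <;> by_cases h4 : t f = v
  all_goals first
    | exact hne ⟨h1, h2⟩
    | exact hnf ⟨h3, h4⟩
    | exact hev.elim h1 h2
    | exact hfv.elim h3 h4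
    | simp [h1, h2, h3, h4, hs, ht] at hcard

private lemma per_cycle {v : V} {e f g : E}
    (hef : e ≠ f) (he : s e ≠ t e) (hf : s f ≠ t f)
    (hge : g ≠ e) (hgf : g ≠ f) (hg : ¬ (s g = v ∧ t g = v))
    (hv : ∀ e' : E, (s e' = v ∨ t e' = v) ↔ (e' = e ∨ e' = f ∨ e' = g))
    (c : GraphCycle s t) :
    ((if c.memE e ∧ c.memE f then epsCyc s t c e f else 0 : ℤ) : ℚ)
      = (-((if s e = v then (1:ℚ) else -1) * (if s f = v then (1:ℚ) else -1))) *
        ((if c.memE e then (1:ℚ) else 0) / 2 + (if c.memE f then (1:ℚ) else 0) / 2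
          - (if c.memE g then (1:ℚ) else 0) / 2) := by
  have hev : s e = v ∨ t e = v := (hv e).mpr (Or.inl rfl)
  have hfv : s f = v ∨ t f = v := (hv f).mpr (Or.inr (Or.inl rfl))
  have hgv : s g = v ∨ t g = v := (hv g).mpr (Or.inr (Or.inr rfl))
  have hgl : s g ≠ t g := by
    intro h
    rcases hgv with h' | h'
    · exact hg ⟨h', h ▸ h'⟩
    · exact hg ⟨h.trans h', h'⟩
  obtain ⟨k, c⟩ := c
  by_cases hcv : ∃ i, c.vtx i = v
  case neg =>
    have hnm : ∀ x : E, (s x = v ∨ t x = v) → ¬ (GraphCycle.memE ⟨k, c⟩ x) := by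
      rintro x hx ⟨j, hj⟩
      exact hcv (through_at c j (by rw [hj]; exact hx))
    rw [if_neg (fun h => hnm e hev h.1), if_neg (hnm e hev), if_neg (hnm f hfv),
      if_neg (hnm g hgv)]
    norm_num
  case pos =>
  obtain ⟨i, hiv⟩ := hcv
  have hk2 : 2 ≤ k := by
    have hinc : s (c.edg i) = v ∨ t (c.edg i) = v :=
      incident_of_vtx c i (Or.inl hiv)
    rcases (hv _).mp hinc with h | h | h
    · exact two_le c i h (by rw [h] at *; exact he)
    · exact two_le c i h (by rw [h] at *; exact hf)
    · exact two_le c i h (by rw [h] at *; exact hgl)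
  haveI : Fact (1 < k) := ⟨hk2⟩
  have hne10 : (i - 1 : ZMod k) ≠ i := by
    intro h
    exact (one_ne_zero : (1 : ZMod k) ≠ 0) (sub_eq_self.mp h)
  have hia : (i - 1) + 1 = i := by ring
  have hmema : GraphCycle.memE ⟨k, c⟩ (c.edg (i - 1)) := ⟨i - 1, rfl⟩
  have hmemb : GraphCycle.memE ⟨k, c⟩ (c.edg i) := ⟨i, rfl⟩
  have honly : ∀ x : E, GraphCycle.memE ⟨k, c⟩ x → (s x = v ∨ t x = v) →
      x = c.edg (i - 1) ∨ x = c.edg i := by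
    rintro x ⟨j, rfl⟩ hx
    rcases index_at c hiv hx with h | h
    · exact Or.inr (congrArg c.edg h)
    · exact Or.inl (congrArg c.edg (eq_sub_of_add_eq h))
  have hxy : v ≠ c.vtx (i - 1) := fun h => hne10 (c.vtx_inj (h ▸ hiv)).symm
  have ha3 := (hv _).mp (incident_of_vtx c (i - 1) (Or.inr (by rw [hia]; exact hiv)))
  have hb3 := (hv _).mp (incident_of_vtx c i (Or.inl hiv))
  have hab : c.edg (i - 1) ≠ c.edg i := fun h => hne10 (c.edg_inj h)
  rcases ha3 with ha | ha | ha <;> rcases hb3 with hb | hb | hb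
  · exact absurd (ha.trans hb.symm) hab
  · -- A = e, B = f
    have hme : GraphCycle.memE ⟨k, c⟩ e := ha ▸ hmema
    have hmf : GraphCycle.memE ⟨k, c⟩ f := hb ▸ hmemb
    have hmg : ¬ GraphCycle.memE ⟨k, c⟩ g := by
      intro hm
      rcases honly g hm hgv with h | h
      · exact hge (h.trans ha)
      · exact hgf (h.trans hb)
    rw [if_pos ⟨hme, hmf⟩, if_pos hme, if_pos hmf, if_neg hmg]
    rw [eps_eq ⟨k, c⟩ ha hb]
    have hpair : ({s e, t e} : Set V) = {v, c.vtx (i - 1)} := by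
      have h0 := c.ends (i - 1)
      rw [ha, hia, hiv] at h0
      rw [h0, Set.pair_comm]
    have hxe := endpoint_xor he hxy hpair
    have hxe' : (s e = c.vtx (i - 1)) ↔ ¬ (s e = v) := by tauto
    rw [hiv]
    simp only [hxe']
    by_cases h1 : s e = v <;> by_cases h2 : s f = v <;> simp [h1, h2] <;> norm_num
  · -- A = e, B = g
    have hme : GraphCycle.memE ⟨k, c⟩ e := ha ▸ hmema
    have hmg : GraphCycle.memE ⟨k, c⟩ g := hb ▸ hmemb
    have hmf : ¬ GraphCycle.memE ⟨k, c⟩ f := by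
      intro hm
      rcases honly f hm hfv with h | h
      · exact hef (h.trans ha).symm
      · exact hgf (h.trans hb).symm
    rw [if_neg (fun h => hmf h.2), if_pos hme, if_neg hmf, if_pos hmg]
    push_cast
    ring
  · -- A = f, B = e
    have hmf : GraphCycle.memE ⟨k, c⟩ f := ha ▸ hmema
    have hme : GraphCycle.memE ⟨k, c⟩ e := hb ▸ hmemb
    have hmg : ¬ GraphCycle.memE ⟨k, c⟩ g := by
      intro hm
      rcases honly g hm hgv with h | h
      · exact hgf (h.trans ha)
      · exact hge (h.trans hb)
    rw [if_pos ⟨hme, hmf⟩, if_pos hme, if_pos hmf, if_neg hmg]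
    rw [eps_eq ⟨k, c⟩ hb ha]
    have hpair : ({s f, t f} : Set V) = {v, c.vtx (i - 1)} := by
      have h0 := c.ends (i - 1)
      rw [ha, hia, hiv] at h0
      rw [h0, Set.pair_comm]
    have hxf := endpoint_xor hf hxy hpair
    have hxf' : (s f = c.vtx (i - 1)) ↔ ¬ (s f = v) := by tauto
    rw [hiv]
    simp only [hxf']
    by_cases h1 : s e = v <;> by_cases h2 : s f = v <;> simp [h1, h2] <;> norm_num
  · exact absurd (ha.trans hb.symm) hab
  · -- A = f, B = g
    have hmf : GraphCycle.memE ⟨k, c⟩ f := ha ▸ hmema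
    have hmg : GraphCycle.memE ⟨k, c⟩ g := hb ▸ hmemb
    have hme : ¬ GraphCycle.memE ⟨k, c⟩ e := by
      intro hm
      rcases honly e hm hev with h | h
      · exact hef (h.trans ha)
      · exact hge (h.trans hb).symm
    rw [if_neg (fun h => hme h.1), if_neg hme, if_pos hmf, if_pos hmg]
    push_cast
    ring
  · -- A = g, B = e
    have hmg : GraphCycle.memE ⟨k, c⟩ g := ha ▸ hmema
    have hme : GraphCycle.memE ⟨k, c⟩ e := hb ▸ hmemb
    have hmf : ¬ GraphCycle.memE ⟨k, c⟩ f := by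
      intro hm
      rcases honly f hm hfv with h | h
      · exact hgf (h.trans ha).symm
      · exact hef (h.trans hb).symm
    rw [if_neg (fun h => hmf h.2), if_pos hme, if_neg hmf, if_pos hmg]
    push_cast
    ring
  · -- A = g, B = f
    have hmg : GraphCycle.memE ⟨k, c⟩ g := ha ▸ hmema
    have hmf : GraphCycle.memE ⟨k, c⟩ f := hb ▸ hmemb
    have hme : ¬ GraphCycle.memE ⟨k, c⟩ e := by
      intro hm
      rcases honly e hm hev with h | h
      · exact hge (h.trans ha).symm
      · exact hef (h.trans hb)
    rw [if_neg (fun h => hme h.1), if_neg hme, if_pos hmf, if_pos hmg]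
    push_cast
    ring
  · exact absurd (ha.trans hb.symm) hab

private lemma cycleMapQ_apply_support [Fintype E] (C : Set (GraphCycle s t)) (c : C)
    {e f g : E} (hef : e ≠ f) (hge : g ≠ e) (hgf : g ≠ f) :
    cycleMapQ s t C ((1/2 : ℚ) • (edgeInd e + edgeInd f + edgeInd g) - edgeInd g) c
      = (if (c : GraphCycle s t).memE e then (1:ℚ) else 0) / 2
        + (if (c : GraphCycle s t).memE f then (1:ℚ) else 0) / 2
        - (if (c : GraphCycle s t).memE g then (1:ℚ) else 0) / 2 := by
  unfold cycleMapQ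
  rw [← Finset.sum_subset (Finset.subset_univ ({e, f, g} : Finset E)) ?_]
  · rw [show ({e, f, g} : Finset E) = insert e (insert f {g}) from rfl]
    rw [Finset.sum_insert (by simp [hef, Ne.symm hge]),
        Finset.sum_insert (by simp [Ne.symm hgf]), Finset.sum_singleton]
    simp only [Pi.sub_apply, Pi.smul_apply, Pi.add_apply, edgeInd, smul_eq_mul]
    by_cases h1 : (c : GraphCycle s t).memE e <;>
      by_cases h2 : (c : GraphCycle s t).memE f <;>
      by_cases h3 : (c : GraphCycle s t).memE g <;>
      simp [h1, h2, h3, hef, hge, hgf, Ne.symm hge, Ne.symm hgf, Ne.symm hef] <;> norm_num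
  · intro x _ hx
    simp only [Finset.mem_insert, Finset.mem_singleton, not_or] at hx
    obtain ⟨hx1, hx2, hx3⟩ := hx
    simp [edgeInd, hx1, hx2, hx3]

private lemma cycleMapQ_zsmul [Fintype E] (C : Set (GraphCycle s t)) (z : ℤ) (x : E → ℚ) :
    cycleMapQ s t C (z • x) = (z : ℚ) • cycleMapQ s t C x := by
  funext c
  unfold cycleMapQ
  simp only [Pi.smul_apply, smul_eq_mul, zsmul_eq_mul, Finset.mul_sum]
  refine Finset.sum_congr rfl fun x' _ => ?_
  split <;> simp

end Aux

/-- (1) `φ(E^{e,e}) = C*(e)` for every edge `e`; and (2) if `e ≠ f` are non-loop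
edges sharing a vertex `v` of degree 3 with third incident edge `g`, then
`φ(E^{e,f}) = −δ^{v,e} δ^{v,f} · C*(½(e + f + g) − g)`, an element of `C*(𝒞_G)`. -/
theorem phiGen_diag_and_adjacent {V E : Type*} [Fintype V] [Fintype E] (s t : E → V)
    (C : Set (GraphCycle s t)) :
    (∀ e : E, (fun c : C => ((phiGenC s t C e e c : ℤ) : ℚ))
        = cycleMapQ s t C (edgeInd e)) ∧
    (∀ (v : V) (e f g : E), e ≠ f → s e ≠ t e → s f ≠ t f →
      (Nat.card {e' : E // s e' = v} + Nat.card {e' : E // t e' = v} = 3) →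
      g ≠ e → g ≠ f →
      (∀ e' : E, (s e' = v ∨ t e' = v) ↔ (e' = e ∨ e' = f ∨ e' = g)) →
      (fun c : C => ((phiGenC s t C e f c : ℤ) : ℚ))
          = (-((if s e = v then (1 : ℚ) else -1) * (if s f = v then (1 : ℚ) else -1))) •
            cycleMapQ s t C ((1/2 : ℚ) • (edgeInd e + edgeInd f + edgeInd g) - edgeInd g) ∧
      (fun c : C => ((phiGenC s t C e f c : ℤ) : ℚ))
          ∈ cycleMapQ s t C '' (CGsub s t : Set (E → ℚ))) := by
  constructor
  · intro e
    funext c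
    simp only [phiGenC, cycleMapQ, edgeInd]
    rw [Finset.sum_eq_single_of_mem e (Finset.mem_univ e) (fun x _ hx => by simp [hx])]
    by_cases hm : (c : GraphCycle s t).memE e
    · have heps : epsCyc s t c e e = 1 := by
        obtain ⟨i, hi⟩ := hm
        exact if_pos ⟨i, i, hi, hi, Iff.rfl⟩
      simp [hm, heps]
    · simp [hm]
  · intro v e f g hef he hf hcard hge hgf hv
    have hg := g_one_end hef he hf hcard hge hgf hv
    have hmain : (fun c : C => ((phiGenC s t C e f c : ℤ) : ℚ))
        = (-((if s e = v then (1 : ℚ) else -1) * (if s f = v then (1 : ℚ) else -1))) •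
          cycleMapQ s t C ((1/2 : ℚ) • (edgeInd e + edgeInd f + edgeInd g) - edgeInd g) := by
      funext c
      simp only [phiGenC, Pi.smul_apply, smul_eq_mul]
      rw [cycleMapQ_apply_support C c hef hge hgf]
      exact per_cycle hef he hf hge hgf hg hv (c : GraphCycle s t)
    refine ⟨hmain, ?_⟩
    have hxe : ¬(s e = v ∧ t e = v) := fun h => he (h.1.trans h.2.symm)
    have hxf : ¬(s f = v ∧ t f = v) := fun h => hf (h.1.trans h.2.symm)
    have huv : uVtx s t v = (1/2 : ℚ) • (edgeInd e + edgeInd f + edgeInd g) := by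
      funext x
      simp only [uVtx, Pi.smul_apply, Pi.add_apply, edgeInd, smul_eq_mul]
      by_cases hx : s x = v ∨ t x = v
      · have hend : ((if s x = v then (1:ℚ) else 0) + (if t x = v then 1 else 0)) = 1 := by
          have hnl : ¬(s x = v ∧ t x = v) := by
            rcases (hv x).mp hx with rfl | rfl | rfl
            exacts [hxe, hxf, hg]
          rcases hx with h | h
          · rw [if_pos h, if_neg (fun h' => hnl ⟨h, h'⟩), add_zero]
          · rw [if_neg (fun h' => hnl ⟨h', h⟩), if_pos h, zero_add]
        rw [hend]
        rcases (hv x).mp hx with rfl | rfl | rfl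
        · have h3 : x ≠ g := fun h => hge h.symm
          simp [hef, h3]
        · have h3 : x ≠ g := fun h => hgf h.symm
          simp [Ne.symm hef, h3]
        · simp [hge, hgf]
      · have hx3 : ¬(x = e ∨ x = f ∨ x = g) := fun h => hx ((hv x).mpr h)
        push_neg at hx hx3
        simp [hx.1, hx.2, hx3.1, hx3.2.1, hx3.2.2]
    set ze : ℤ := if s e = v then 1 else -1 with hze
    set zf : ℤ := if s f = v then 1 else -1 with hzf
    refine ⟨(-(ze * zf)) • (uVtx s t v - edgeInd g), ?_, ?_⟩
    · exact Submodule.smul_mem _ _ (Submodule.sub_mem _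
        (Submodule.subset_span (Or.inr ⟨v, rfl⟩))
        (Submodule.subset_span (Or.inl ⟨g, rfl⟩)))
    · rw [huv, cycleMapQ_zsmul]
      have hz : ((-(ze * zf) : ℤ) : ℚ)
          = -((if s e = v then (1 : ℚ) else -1) * (if s f = v then (1 : ℚ) else -1)) := by
        rw [hze, hzf]
        by_cases h1 : s e = v <;> by_cases h2 : s f = v <;> simp [h1, h2]
      rw [hz]
      exact hmain.symm
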